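/- The mutation operator M is chaotic according to Devaney on (X_N, d): M is continuous, topologically transitive (for any nonempty open sets U, V there exists k > 0 with M^k(U) ∩ V ≠ ∅), and regular (its periodic points are dense in X_N). -/

import Mathlib

/-- The discrete metric on ℝ: `ddelta x y = 1` if `x ≠ y`, and `0` otherwise. -/
noncomputable def ddelta (x y : ℝ) : ℝ := if x = y then 0 else 1

/-- `Fdel (x₁, x₂) = |x₁| + δ(0, x₂)`. -/
noncomputable def Fdel (x : ℝ × ℝ) : ℝ := |x.1| + ddelta 0 x.2

/-- A single mutation: a position in `{1,…,N}` together with a nucleotide in `{1,2,3,4}`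
(encoded with `Fin N` and `Fin 4`). -/
abbrev Mut (N : ℕ) := Fin N × Fin 4

/-- A mutations sequence: an infinite sequence of mutations. -/
abbrev MutSeq (N : ℕ) := ℕ → Mut N

/-- A genome of size `N`: a sequence of `N` nucleotides in `{1,2,3,4}` (encoded by `Fin 4`,
where `0,1,2,3` stand for the labels `1,2,3,4`, i.e. `A,C,G,T`). -/
abbrev Genome (N : ℕ) := Fin N → Fin 4

/-- The phase space `X_N = {1,2,3,4}^N × S_N`. -/
abbrev Phase (N : ℕ) := Genome N × MutSeq N

/-- A mutation regarded as a pair of real numbers, using the labels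
`1,…,N` for positions and `1,2,3,4` for nucleotides. -/
noncomputable def mutR {N : ℕ} (m : Mut N) : ℝ × ℝ :=
  ((m.1.1 : ℝ) + 1, (m.2.1 : ℝ) + 1)

/-- `d_G(G, Ǧ) = Σ_{k=1}^{N} δ(G_k, Ǧ_k)`, with `δ` the discrete metric. -/
noncomputable def dG {N : ℕ} (G G' : Genome N) : ℝ :=
  ∑ k : Fin N, if G k = G' k then (0 : ℝ) else 1

/-- `d_S(S, Š) = (9/N) Σ_{k=0}^{∞} F(S^k − Š^k)/10^(k+1)`. -/
noncomputable def dS {N : ℕ} (S S' : MutSeq N) : ℝ :=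
  (9 / N) * ∑' k : ℕ, Fdel (mutR (S k) - mutR (S' k)) / 10 ^ (k + 1)

/-- The distance `d((G,S), (Ǧ,Š)) = d_G(G,Ǧ) + d_S(S,Š)` on the phase space. -/
noncomputable def dX {N : ℕ} (X Y : Phase N) : ℝ := dG X.1 Y.1 + dS X.2 Y.2

/-- The mutation operator `M(G, S) = (G', σ(S))`: the nucleotide of `G` at position `(S⁰)₁`
is replaced by the nucleotide `(S⁰)₂`, and the mutations sequence is shifted. -/
noncomputable def Mop {N : ℕ} (X : Phase N) : Phase N :=
  (Function.update X.1 (X.2 0).1 (X.2 0).2, fun k => X.2 (k + 1))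

/-- A set `U ⊆ X_N` is open for the metric `d` if around any of its points it
contains an open ball of positive radius. -/
def IsOpenD {N : ℕ} (U : Set (Phase N)) : Prop :=
  ∀ x ∈ U, ∃ ε > 0, ∀ y, dX x y < ε → y ∈ U

/-!
Small distance means a long common prefix: `dX X Y < min 1 (9 / N * 10⁻ᵐ)` forces equal genomes
and equal first `m` mutations, and conversely these give `dX X Y ≤ 10⁻ᵐ`. As `M` only consumes
the first mutation and shifts the rest, it is continuous. Both transitivity and density of
periodic points come from steering: keep the first `m` mutations of `X`, then append the `N`
mutations `(p, H p)`, which rewrite every position, so after `N + m` steps the genome is `H`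
whatever it was before. Continuing with the mutations of a target `Y` and `H = Y.1` reaches `Y`;
repeating the block of length `N + m` with `H = X.1` gives a periodic point close to `X`.
-/

section
variable {N : ℕ}

lemma Fdel_mutR_sub (m m' : Mut N) :
    Fdel (mutR m - mutR m') = |(m.1 : ℝ) - m'.1| + if m.2 = m'.2 then 0 else 1 := by
  simp only [Fdel, mutR, ddelta, Prod.fst_sub, Prod.snd_sub, add_sub_add_right_eq_sub,
    eq_comm (a := (0 : ℝ)), sub_eq_zero, Nat.cast_inj, Fin.val_inj]

lemma Fdel_mutR_sub_le (m m' : Mut N) : Fdel (mutR m - mutR m') ≤ N := by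
  have hm : (m.1 : ℝ) + 1 ≤ N := by exact_mod_cast m.1.isLt
  have hm' : (m'.1 : ℝ) + 1 ≤ N := by exact_mod_cast m'.1.isLt
  have habs : |(m.1 : ℝ) - m'.1| ≤ N - 1 := abs_sub_le_iff.mpr
    ⟨by linarith [m'.1.val.cast_nonneg (α := ℝ)], by linarith [m.1.val.cast_nonneg (α := ℝ)]⟩
  rw [Fdel_mutR_sub]
  split_ifs <;> linarith

lemma one_le_Fdel_mutR_sub {m m' : Mut N} (h : m ≠ m') : 1 ≤ Fdel (mutR m - mutR m') := by
  rw [Fdel_mutR_sub]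
  by_cases h2 : m.2 = m'.2
  · have h1 : (m.1 : ℕ) ≠ m'.1 := fun h1 => h (Prod.ext (Fin.ext h1) h2)
    have : (1 : ℝ) ≤ |(m.1 : ℝ) - m'.1| := by
      rcases h1.lt_or_gt with hlt | hlt
      · rw [abs_sub_comm, le_abs, le_sub_iff_add_le']; left; exact_mod_cast hlt
      · rw [le_abs, le_sub_iff_add_le']; left; exact_mod_cast hlt
    simpa [h2] using this
  · simp [h2]

lemma Fdel_mutR_sub_div_nonneg (m m' : Mut N) (k : ℕ) :
    0 ≤ Fdel (mutR m - mutR m') / 10 ^ k := by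
  rw [Fdel_mutR_sub]; positivity

lemma Fdel_mutR_sub_div_le (m m' : Mut N) (k : ℕ) :
    Fdel (mutR m - mutR m') / 10 ^ k ≤ N * (1 / 10) ^ k := by
  rw [one_div_pow, ← div_eq_mul_one_div]
  gcongr
  exact Fdel_mutR_sub_le m m'

lemma summable_dS_term (S S' : MutSeq N) :
    Summable fun k => Fdel (mutR (S k) - mutR (S' k)) / 10 ^ (k + 1) :=
  .of_nonneg_of_le (fun k => Fdel_mutR_sub_div_nonneg _ _ _)
    (fun k => Fdel_mutR_sub_div_le (S k) (S' k) (k + 1))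
    (((summable_geometric_of_lt_one (by norm_num) (by norm_num)).mul_left _).comp_injective
      (add_left_injective 1))

lemma dS_le_of_forall_lt_eq {S S' : MutSeq N} {m : ℕ} (h : ∀ j < m, S j = S' j) :
    dS S S' ≤ (1 / 10) ^ m := by
  have hf := summable_dS_term S S'
  have hprefix : ∑ k ∈ Finset.range m, Fdel (mutR (S k) - mutR (S' k)) / 10 ^ (k + 1) = 0 :=
    Finset.sum_eq_zero fun k hk => by simp [h k (Finset.mem_range.mp hk), Fdel, ddelta]
  have htail : ∑' i, Fdel (mutR (S (i + m)) - mutR (S' (i + m))) / 10 ^ (i + m + 1) ≤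
      ∑' i, N * (1 / 10) ^ (m + 1) * (1 / 10 : ℝ) ^ i :=
    ((summable_nat_add_iff m).mpr hf).tsum_le_tsum
      (fun i => (Fdel_mutR_sub_div_le _ _ _).trans_eq (by ring))
      ((summable_geometric_of_lt_one (by norm_num) (by norm_num)).mul_left _)
  rw [tsum_mul_left, tsum_geometric_of_lt_one (by norm_num) (by norm_num)] at htail
  have hN : 0 < N := (S 0).1.pos
  unfold dS
  rw [← hf.sum_add_tsum_nat_add m, hprefix, zero_add]
  calc 9 / (N : ℝ) * _ ≤ 9 / N * (N * (1 / 10) ^ (m + 1) * (1 - 1 / 10)⁻¹) := by gcongr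
    _ = (1 / 10) ^ m := by field_simp; ring

lemma le_dS_of_ne {S S' : MutSeq N} {j : ℕ} (h : S j ≠ S' j) :
    9 / N * (1 / 10) ^ (j + 1) ≤ dS S S' := by
  have hterm : (1 / 10 : ℝ) ^ (j + 1) ≤ Fdel (mutR (S j) - mutR (S' j)) / 10 ^ (j + 1) := by
    rw [one_div_pow]
    gcongr
    exact one_le_Fdel_mutR_sub h
  unfold dS
  gcongr
  exact hterm.trans
    ((summable_dS_term S S').le_tsum j fun k _ => Fdel_mutR_sub_div_nonneg _ _ _)

lemma dG_nonneg (G G' : Genome N) : 0 ≤ dG G G' :=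
  Finset.sum_nonneg fun _ _ => by positivity

lemma dS_nonneg (S S' : MutSeq N) : 0 ≤ dS S S' :=
  mul_nonneg (by positivity) (tsum_nonneg fun _ => Fdel_mutR_sub_div_nonneg _ _ _)

lemma eq_of_dG_lt_one {G G' : Genome N} (h : dG G G' < 1) : G = G' := by
  by_contra hne
  obtain ⟨p, hp⟩ := Function.ne_iff.mp hne
  have : (1 : ℝ) ≤ dG G G' := by
    unfold dG
    simpa [hp] using Finset.single_le_sum (f := fun k => if G k = G' k then (0 : ℝ) else 1)
      (fun _ _ => by positivity) (Finset.mem_univ p)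
  linarith

def AgreeUpTo (m : ℕ) (X Y : Phase N) : Prop :=
  X.1 = Y.1 ∧ ∀ j < m, X.2 j = Y.2 j

lemma exists_dX_lt_of_agreeUpTo {ε : ℝ} (hε : 0 < ε) :
    ∃ m, ∀ X Y : Phase N, AgreeUpTo m X Y → dX X Y < ε := by
  obtain ⟨m, hm⟩ := exists_pow_lt_of_lt_one hε (by norm_num : (1 / 10 : ℝ) < 1)
  refine ⟨m, fun X Y ⟨hG, hS⟩ => ?_⟩
  calc dX X Y = dS X.2 Y.2 := by simp [dX, dG, hG]
    _ ≤ (1 / 10) ^ m := dS_le_of_forall_lt_eq hS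
    _ < ε := hm

lemma exists_agreeUpTo_of_dX_lt (m : ℕ) :
    ∃ η > 0, ∀ X Y : Phase N, dX X Y < η → AgreeUpTo m X Y := by
  rcases N.eq_zero_or_pos with rfl | hN
  · exact ⟨1, one_pos, fun X => (X.2 0).1.elim0⟩
  refine ⟨min 1 (9 / N * (1 / 10) ^ m), by positivity, fun X Y hXY => ?_⟩
  have hG := dG_nonneg X.1 Y.1
  have hS := dS_nonneg X.2 Y.2
  rw [lt_min_iff, dX] at hXY
  refine ⟨eq_of_dG_lt_one (by linarith), fun j hj => ?_⟩
  by_contra hne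
  have : 9 / N * (1 / 10 : ℝ) ^ m ≤ 9 / N * (1 / 10) ^ (j + 1) :=
    mul_le_mul_of_nonneg_left (pow_le_pow_of_le_one (by norm_num) (by norm_num) hj) (by positivity)
  linarith [le_dS_of_ne hne]

lemma iterate_Mop_snd (X : Phase N) (k : ℕ) : (Mop^[k] X).2 = fun j => X.2 (j + k) := by
  induction k with
  | zero => rfl
  | succ k ih =>
    rw [Function.iterate_succ_apply', Mop, ih]
    simp only [add_right_comm _ 1 k, add_assoc]

lemma iterate_succ_Mop_fst (X : Phase N) (k : ℕ) :
    (Mop^[k + 1] X).1 = Function.update (Mop^[k] X).1 (X.2 k).1 (X.2 k).2 := by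
  simp only [Function.iterate_succ_apply', Mop, iterate_Mop_snd, zero_add]

lemma agreeUpTo_Mop {m : ℕ} {X Y : Phase N} (h : AgreeUpTo (m + 1) X Y) :
    AgreeUpTo m (Mop X) (Mop Y) := by
  obtain ⟨hG, hS⟩ := h
  refine ⟨?_, fun j hj => hS (j + 1) (by omega)⟩
  unfold Mop
  rw [hG, hS 0 (by omega)]

lemma iterate_Mop_of_writes {X : Phase N} {H : Genome N} {m : ℕ}
    (hw : ∀ p : Fin N, X.2 (p + m) = (p, H p)) :
    Mop^[N + m] X = (H, fun j => X.2 (j + (N + m))) := by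
  refine Prod.ext ?_ (iterate_Mop_snd X _)
  have key : ∀ k ≤ N, ∀ p : Fin N,
      (Mop^[k + m] X).1 p = if p.1 < k then H p else (Mop^[m] X).1 p := by
    intro k hk p
    induction k with
    | zero => simp
    | succ k ih =>
      rw [add_right_comm, iterate_succ_Mop_fst, hw ⟨k, hk⟩]
      rcases eq_or_ne p ⟨k, hk⟩ with rfl | hp
      · simp
      · have : p.1 ≠ k := fun h => hp (Fin.ext h)
        rw [Function.update_of_ne hp, ih (by omega)]
        simp only [Nat.lt_succ_iff_lt_or_eq, this, or_false]
  funext p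
  simpa using key N le_rfl p

def steerSeq (m : ℕ) (S : MutSeq N) (Y : Phase N) : MutSeq N := fun j =>
  if j < m then S j
  else if h : j - m < N then (⟨j - m, h⟩, Y.1 ⟨j - m, h⟩)
  else Y.2 (j - m - N)

lemma steerSeq_of_lt {m j : ℕ} (S : MutSeq N) (Y : Phase N) (hj : j < m) :
    steerSeq m S Y j = S j := if_pos hj

lemma steerSeq_add (m : ℕ) (S : MutSeq N) (Y : Phase N) (p : Fin N) :
    steerSeq m S Y (p + m) = (p, Y.1 p) := by
  simp [steerSeq]

lemma steerSeq_add_add (m : ℕ) (S : MutSeq N) (Y : Phase N) (j : ℕ) :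
    steerSeq m S Y (j + (N + m)) = Y.2 j := by
  rw [steerSeq, if_neg (by omega), dif_neg (by omega), Nat.sub_sub, add_comm m N,
    Nat.add_sub_cancel]

lemma iterate_Mop_steerSeq (m : ℕ) (G : Genome N) (S : MutSeq N) (Y : Phase N) :
    Mop^[N + m] (G, steerSeq m S Y) = Y := by
  rw [iterate_Mop_of_writes (steerSeq_add m S Y)]
  simp only [steerSeq_add_add]

lemma exists_periodic_agreeUpTo (m : ℕ) (X : Phase N) :
    ∃ Y, AgreeUpTo m X Y ∧ Mop^[N + m] Y = Y := by
  set Q : MutSeq N := fun j => steerSeq m X.2 X (j % (N + m))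
  refine ⟨(X.1, Q), ⟨rfl, fun j hj => ?_⟩, ?_⟩
  · simp [Q, Nat.mod_eq_of_lt (show j < N + m by omega), steerSeq_of_lt _ _ hj]
  · rw [iterate_Mop_of_writes (H := X.1) fun p => ?_]
    · simp [Q]
    · simp [Q, Nat.mod_eq_of_lt (show p + m < N + m by omega), steerSeq_add]

end

theorem Mop_Devaney_chaotic_general (N : ℕ) :
    (∀ X : Phase N, ∀ ε > (0 : ℝ), ∃ η > (0 : ℝ),
      ∀ Y : Phase N, dX X Y < η → dX (Mop X) (Mop Y) < ε) ∧
    (∀ U V : Set (Phase N), IsOpenD U → IsOpenD V → U.Nonempty → V.Nonempty →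
      ∃ k : ℕ, 0 < k ∧ ((Mop (N := N))^[k] '' U ∩ V).Nonempty) ∧
    (∀ X : Phase N, ∀ ε > (0 : ℝ),
      ∃ Y : Phase N, dX X Y < ε ∧ ∃ n : ℕ, 1 ≤ n ∧ (Mop (N := N))^[n] Y = Y) := by
  refine ⟨fun X ε hε => ?_, fun U V hU _ ⟨X, hX⟩ ⟨Y, hY⟩ => ?_, fun X ε hε => ?_⟩
  · obtain ⟨m, hm⟩ := exists_dX_lt_of_agreeUpTo (N := N) hε
    obtain ⟨η, hη, hagree⟩ := exists_agreeUpTo_of_dX_lt (N := N) (m + 1)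
    exact ⟨η, hη, fun Y hY => hm _ _ (agreeUpTo_Mop (hagree X Y hY))⟩
  · obtain ⟨ε, hε, hball⟩ := hU X hX
    obtain ⟨m, hm⟩ := exists_dX_lt_of_agreeUpTo (N := N) hε
    have hZ : (X.1, steerSeq m X.2 Y) ∈ U :=
      hball _ (hm _ _ ⟨rfl, fun j hj => (steerSeq_of_lt X.2 Y hj).symm⟩)
    exact ⟨N + m, by have := (X.2 0).1.pos; omega, Y,
      ⟨_, hZ, iterate_Mop_steerSeq m X.1 X.2 Y⟩, hY⟩
  · obtain ⟨m, hm⟩ := exists_dX_lt_of_agreeUpTo (N := N) hε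
    obtain ⟨Y, hXY, hY⟩ := exists_periodic_agreeUpTo m X
    exact ⟨Y, hm X Y hXY, N + m, by have := (X.2 0).1.pos; omega, hY⟩

/-- The mutation operator `M` is chaotic according to Devaney on `(X_N, d)`:
it is continuous, topologically transitive, and regular (dense periodic points). -/
theorem Mop_Devaney_chaotic (N : ℕ) (hN : 1 ≤ N) :
    (∀ X : Phase N, ∀ ε > (0 : ℝ), ∃ η > (0 : ℝ),
      ∀ Y : Phase N, dX X Y < η → dX (Mop X) (Mop Y) < ε) ∧
    (∀ U V : Set (Phase N), IsOpenD U → IsOpenD V → U.Nonempty → V.Nonempty →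
      ∃ k : ℕ, 0 < k ∧ ((Mop (N := N))^[k] '' U ∩ V).Nonempty) ∧
    (∀ X : Phase N, ∀ ε > (0 : ℝ),
      ∃ Y : Phase N, dX X Y < ε ∧ ∃ n : ℕ, 1 ≤ n ∧ (Mop (N := N))^[n] Y = Y) :=
  Mop_Devaney_chaotic_general N
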